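/- Let θ be a non-constant inner function, u, v unit vectors in H² with S*v ≠ 0 and u ⊥ zθH², and R₁ = H_{θ̄} + ⟨·, u⟩ v. If 1 + ⟨θJv, u⟩ ≠ 0, then Ker R₁ = zθH², which is nearly S*-invariant with defect 1, and admits the representation Ker R₁ = { f ∈ H² : f = k₁ z θ, k₁ ∈ H² }. -/

import Mathlib

noncomputable section

open MeasureTheory Complex
open scoped ENNReal ComplexConjugate

namespace Hardy

instance fact_one_pos : Fact ((0:ℝ) < 1) := ⟨one_pos⟩
instance fact_one_le_top : Fact ((1:ℝ≥0∞) ≤ ∞) := ⟨le_top⟩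

/-- The unit circle, modelled additively as `ℝ/ℤ`. -/
abbrev Circ := AddCircle (1 : ℝ)
/-- Normalized Haar (arc-length) measure on the circle. -/
abbrev μT : Measure Circ := AddCircle.haarAddCircle
/-- The Lebesgue space `L²(𝕋)`. -/
abbrev L2 : Type := Lp ℂ 2 μT
/-- The space `L^∞(𝕋)`. -/
abbrev Linf : Type := Lp ℂ ⊤ μT

/-- Multiplication of an `L²` function by an `L^∞` function. -/
def mul (φ : Linf) (f : L2) : L2 :=
  MemLp.toLp ((φ : Circ → ℂ) • (f : Circ → ℂ))
    ((Lp.memLp f).smul (Lp.memLp φ))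

/-- Multiplication in `L^∞`. -/
def mulInf (φ ψ : Linf) : Linf :=
  MemLp.toLp ((φ : Circ → ℂ) • (ψ : Circ → ℂ))
    ((Lp.memLp ψ).smul (Lp.memLp φ))

/-- Complex conjugation on `L^∞`. -/
def conjInf (φ : Linf) : Linf :=
  MemLp.toLp (fun x => conj ((φ : Circ → ℂ) x))
    (Complex.isometry_conj.lipschitz.comp_memLp (map_zero _) (Lp.memLp φ))

/-- Negation on the circle preserves Haar measure. -/
lemma negMP : MeasurePreserving (fun x : Circ => -x) μT μT :=
  Measure.measurePreserving_neg μT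

/-- The flip operator `J` on `L²`: `(Jf)(ξ) = f(ξ̄)`, i.e. `x ↦ f(-x)`. -/
def J (f : L2) : L2 := Lp.compMeasurePreserving (fun x : Circ => -x) negMP f

/-- The flip operator on `L^∞`. -/
def Jinf (φ : Linf) : Linf := Lp.compMeasurePreserving (fun x : Circ => -x) negMP φ

/-- The Hardy space `H²`, the closed span of the nonnegative Fourier modes in `L²`. -/
def H2 : Submodule ℂ L2 :=
  (Submodule.span ℂ (Set.range fun n : ℕ => (fourierLp 2 (n : ℤ) : L2))).topologicalClosure

instance : CompleteSpace H2 :=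
  (Submodule.isClosed_topologicalClosure _).completeSpace_coe

/-- The Riesz (orthogonal) projection `P : L² → H²` (viewed as a map into `L²`). -/
def P (f : L2) : L2 := (H2.orthogonalProjectionOnto f : L2)

/-- The `n`-th Fourier coefficient of `f ∈ L²`.  For `f ∈ H²`, `coeff f 0 = f(0)`,
the value at the origin of the holomorphic extension. -/
def coeff (f : L2) (n : ℤ) : ℂ := inner ℂ ((fourierLp 2 n : L2)) f

/-- The `H²` inner product (inherited from `L²`), conjugate-linear in the first slot. -/
def ip (f g : L2) : ℂ := inner ℂ f g

/-- The symbol `z` as an element of `L^∞`. -/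
def zsym : Linf := fourierLp ⊤ 1
/-- The symbol `z̄` as an element of `L^∞`. -/
def zbar : Linf := fourierLp ⊤ (-1)

/-- The unilateral (forward) shift `S` on `L²` (restricting to `H²`): `f ↦ z f`. -/
def shift (f : L2) : L2 := mul zsym f
/-- The backward shift `S* = T_{z̄}` on `H²`: `f ↦ P(z̄ f)`. -/
def bshift (f : L2) : L2 := P (mul zbar f)

/-- The Toeplitz operator `T_φ f = P(φ f)`. -/
def toep (φ : Linf) (f : L2) : L2 := P (mul φ f)
/-- The Hankel operator `H_φ f = P J(φ f)`. -/
def hank (φ : Linf) (f : L2) : L2 := P (J (mul φ f))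

/-- The constant function `1` in `L²`. -/
def one2 : L2 := fourierLp 2 0
/-- The canonical image of an `L^∞` function in `L²`. -/
def toL2 (φ : Linf) : L2 := mul φ one2

/-- `φ ∈ L^∞` belongs to `H^∞`, i.e. multiplication by `φ` preserves `H²`. -/
def IsHinf (φ : Linf) : Prop := ∀ f ∈ H2, mul φ f ∈ H2

/-- `θ` is an inner function: `θ ∈ H^∞` and `|θ| = 1` a.e. on the circle. -/
def IsInner (θ : Linf) : Prop :=
  IsHinf θ ∧ ∀ᵐ x ∂μT, ‖(θ : Circ → ℂ) x‖ = 1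

/-- `θ` is non-constant (as an a.e.-defined function). -/
def NonConst (θ : Linf) : Prop := ¬ ∃ c : ℂ, (θ : Circ → ℂ) =ᵐ[μT] fun _ => c

/-- The shift-invariant subspace `θH² = {θ g : g ∈ H²}`. -/
def thetaH2 (θ : Linf) : Set L2 := {g | ∃ f ∈ H2, g = mul θ f}

end Hardy

namespace Hardy

/-- The kernel of the `n`-rank perturbed Hankel operator
`R_n h = H_φ h + ∑ ⟨h, uᵢ⟩ vᵢ`, as a subset of `H²`. -/
def kerR (φ : Linf) {n : ℕ} (u v : Fin n → L2) : Set L2 :=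
  {h | h ∈ H2 ∧ hank φ h + ∑ i, ip (u i) h • v i = 0}

end Hardy

open Hardy

namespace Hardy

open scoped InnerProductSpace

lemma mul_ae (φ : Linf) (f : L2) :
    ⇑(mul φ f) =ᵐ[μT] fun x => (φ : Circ → ℂ) x * (f : Circ → ℂ) x := by
  filter_upwards [MemLp.coeFn_toLp ((Lp.memLp f).smul (Lp.memLp φ) : MemLp _ 2 μT)] with x hx
  exact hx

lemma conjInf_ae (φ : Linf) :
    ⇑(conjInf φ) =ᵐ[μT] fun x => conj ((φ : Circ → ℂ) x) :=
  MemLp.coeFn_toLp _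

lemma J_ae (f : L2) : ⇑(J f) =ᵐ[μT] fun x => (f : Circ → ℂ) (-x) :=
  Lp.coeFn_compMeasurePreserving f negMP

lemma coeff_def (f : L2) (n : ℤ) :
    coeff f n = ∫ x, conj (fourier n x) * (f : Circ → ℂ) x ∂μT := by
  rw [coeff, MeasureTheory.L2.inner_def]
  refine integral_congr_ae ?_
  filter_upwards [coeFn_fourierLp (T := 1) 2 n] with x hx
  rw [RCLike.inner_apply, hx, mul_comm]

lemma coeff_add (f g : L2) (n : ℤ) : coeff (f + g) n = coeff f n + coeff g n :=
  inner_add_right _ _ _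

lemma coeff_smul (c : ℂ) (f : L2) (n : ℤ) : coeff (c • f) n = c * coeff f n :=
  inner_smul_right _ _ _

lemma coeff_sub (f g : L2) (n : ℤ) : coeff (f - g) n = coeff f n - coeff g n :=
  inner_sub_right _ _ _

lemma coeff_neg (f : L2) (n : ℤ) : coeff (-f) n = -coeff f n :=
  inner_neg_right _ _

lemma coeff_zero' (n : ℤ) : coeff (0 : L2) n = 0 := inner_zero_right _

lemma coeff_fourier (m n : ℤ) :
    coeff (fourierLp 2 m : L2) n = if n = m then 1 else 0 :=
  orthonormal_iff_ite.mp orthonormal_fourier n m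

lemma coeff_mul_fourier (m : ℤ) (f : L2) (n : ℤ) :
    coeff (mul (fourierLp ⊤ m) f) n = coeff f (n - m) := by
  rw [coeff_def, coeff_def]
  refine integral_congr_ae ?_
  filter_upwards [mul_ae (fourierLp ⊤ m) f, coeFn_fourierLp (T := 1) ⊤ m] with x hx hm
  rw [hx, hm]
  have hnm : n - m + m = n := by ring
  have h1 : (fourier n x : ℂ) = fourier (n - m) x * fourier m x := by
    conv_lhs => rw [← hnm]
    exact fourier_add
  have h2 : conj (fourier m x : ℂ) * fourier m x = 1 := by
    rw [← fourier_neg, ← fourier_add, show -m + m = 0 by ring, fourier_zero]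
  calc conj (fourier n x : ℂ) * (fourier m x * (f : Circ → ℂ) x)
      = conj (fourier (n - m) x : ℂ) * (conj (fourier m x : ℂ) * fourier m x)
          * (f : Circ → ℂ) x := by rw [h1, map_mul]; ring
    _ = conj (fourier (n - m) x : ℂ) * (f : Circ → ℂ) x := by rw [h2, mul_one]

lemma fourier_neg_arg (m : ℤ) (x : Circ) : fourier m (-x) = fourier (-m) x := by
  rw [fourier_apply, fourier_apply, smul_neg, neg_smul]

lemma coeff_J (f : L2) (n : ℤ) : coeff (J f) n = coeff f (-n) := by
  rw [coeff_def, coeff_def]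
  have step1 : (∫ x, conj (fourier n x : ℂ) * (J f : Circ → ℂ) x ∂μT)
      = ∫ x, conj (fourier (-n) (-x) : ℂ) * (f : Circ → ℂ) (-x) ∂μT := by
    refine integral_congr_ae ?_
    filter_upwards [J_ae f] with x hx
    rw [hx, fourier_neg_arg, neg_neg]
  rw [step1]
  exact MeasurePreserving.integral_comp' (f := MeasurableEquiv.neg Circ)
    (Measure.measurePreserving_neg μT)
    (fun y => conj (fourier (-n) y : ℂ) * (f : Circ → ℂ) y)

lemma fourierLp_mem_H2 {n : ℤ} (hn : 0 ≤ n) : (fourierLp 2 n : L2) ∈ H2 := by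
  refine Submodule.le_topologicalClosure _ ?_
  exact Submodule.subset_span ⟨n.toNat, congrArg (fourierLp 2) (Int.toNat_of_nonneg hn)⟩

lemma one2_mem_H2 : one2 ∈ H2 := fourierLp_mem_H2 le_rfl

lemma coeff_zero_of_mem_H2 {f : L2} (hf : f ∈ H2) {n : ℤ} (hn : n < 0) : coeff f n = 0 := by
  have hspan : Submodule.span ℂ (Set.range fun k : ℕ => (fourierLp 2 (k : ℤ) : L2))
      ≤ LinearMap.ker ((innerSL ℂ (fourierLp 2 n : L2)) : L2 →ₗ[ℂ] ℂ) := by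
    rw [Submodule.span_le]
    rintro _ ⟨k, rfl⟩
    simp only [SetLike.mem_coe, LinearMap.mem_ker, ContinuousLinearMap.coe_coe, innerSL_apply_apply]
    rw [orthonormal_iff_ite.mp orthonormal_fourier n (k : ℤ), if_neg (by omega)]
  have hK : H2 ≤ LinearMap.ker ((innerSL ℂ (fourierLp 2 n : L2)) : L2 →ₗ[ℂ] ℂ) :=
    Submodule.topologicalClosure_minimal _ hspan (ContinuousLinearMap.isClosed_ker _)
  have := hK hf
  rw [LinearMap.mem_ker] at this
  simpa [coeff] using this

lemma fourierBasis_apply (i : ℤ) :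
    (fourierBasis (T := 1)) i = (fourierLp 2 i : L2) :=
  congrFun coe_fourierBasis i

lemma coeff_ext {f g : L2} (h : ∀ n, coeff f n = coeff g n) : f = g := by
  have hb : ∀ i : ℤ, (fourierBasis (T := 1)).repr (f - g) i = 0 := by
    intro i
    rw [HilbertBasis.repr_apply_apply, inner_sub_right, fourierBasis_apply]
    exact sub_eq_zero.mpr (h i)
  have h0 : (fourierBasis (T := 1)).repr (f - g) = 0 := by
    ext i; simpa using hb i
  have h2 : f - g = 0 := by
    apply (fourierBasis (T := 1)).repr.injective
    simpa using h0
  exact sub_eq_zero.mp h2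

lemma mem_H2_of_coeff {f : L2} (h : ∀ n : ℤ, n < 0 → coeff f n = 0) : f ∈ H2 := by
  have hmem : f ∈ H2ᗮᗮ := by
    rw [Submodule.mem_orthogonal]
    intro g hg
    have hg' : ∀ n : ℤ, 0 ≤ n → coeff g n = 0 := fun n hn =>
      (Submodule.mem_orthogonal H2 g).mp hg _ (fourierLp_mem_H2 hn)
    rw [← HilbertBasis.tsum_inner_mul_inner (fourierBasis (T := 1)) g f]
    have hterm : ∀ i : ℤ,
        (inner ℂ g ((fourierBasis (T := 1)) i) : ℂ) * inner ℂ ((fourierBasis (T := 1)) i) f = 0 := by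
      intro i
      rw [fourierBasis_apply]
      rcases le_or_gt 0 i with hi | hi
      · have h1 : (inner ℂ g (fourierLp 2 i : L2) : ℂ) = 0 := by
          rw [← inner_conj_symm]
          have : coeff g i = 0 := hg' i hi
          rw [coeff] at this
          rw [this, map_zero]
        rw [h1, zero_mul]
      · have h2 : (inner ℂ (fourierLp 2 i : L2) f : ℂ) = 0 := h i hi
        rw [h2, mul_zero]
    exact (tsum_congr hterm).trans tsum_zero
  rwa [Submodule.orthogonal_orthogonal] at hmem

lemma P_mem (f : L2) : P f ∈ H2 := (H2.orthogonalProjectionOnto f).2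

lemma P_eq_self {f : L2} (hf : f ∈ H2) : P f = f :=
  H2.starProjection_eq_self_iff.mpr hf

lemma coeff_P (f : L2) {n : ℤ} (hn : 0 ≤ n) : coeff (P f) n = coeff f n := by
  have h := (Submodule.mem_orthogonal H2 _).mp
    (H2.sub_starProjection_mem_orthogonal f) _ (fourierLp_mem_H2 hn)
  have h2 : coeff f n - coeff (P f) n = 0 := by
    rw [coeff, coeff, ← inner_sub_right]; exact h
  exact (sub_eq_zero.mp h2).symm

lemma P_eq_zero {f : L2} (h : ∀ n : ℤ, 0 ≤ n → coeff f n = 0) : P f = 0 := by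
  apply coeff_ext; intro n
  rw [coeff_zero']
  rcases le_or_gt 0 n with hn | hn
  · rw [coeff_P f hn]; exact h n hn
  · exact coeff_zero_of_mem_H2 (P_mem f) hn

lemma conj_mul_self_ae {θ : Linf} (h : ∀ᵐ x ∂μT, ‖(θ : Circ → ℂ) x‖ = 1) :
    ∀ᵐ x ∂μT, conj ((θ : Circ → ℂ) x) * (θ : Circ → ℂ) x = 1 := by
  filter_upwards [h] with x hx
  rw [mul_comm, Complex.mul_conj, Complex.normSq_eq_norm_sq, hx]
  norm_num

lemma fourier_one_mul_neg_one (x : Circ) : (fourier 1 x : ℂ) * fourier (-1) x = 1 := by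
  rw [← fourier_add, show (1 : ℤ) + -1 = 0 by ring, fourier_zero]

end Hardy


/-- if `u ⊥ zθH²` and `1 + ⟨θJv, u⟩ ≠ 0`, then
`Ker R₁ = zθH² = {f = k₁zθ : k₁ ∈ H²}`, which is nearly `S*`-invariant with defect `1`. -/
theorem kerR_eq_shifted_thetaH2_of_perp
    (θ : Linf) (hθ : IsInner θ) (hθc : NonConst θ)
    (u v : L2) (hu1 : ‖u‖ = 1) (hv1 : ‖v‖ = 1)
    (huH : u ∈ H2) (hvH : v ∈ H2) (hv0 : bshift v ≠ 0)
    (hperp : ∀ f ∈ H2, ip (shift (mul θ f)) u = 0)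
    (hne : 1 + ip u (mul θ (J v)) ≠ 0) :
    kerR (conjInf θ) (fun _ : Fin 1 => u) (fun _ : Fin 1 => v) =
        {g | ∃ k ∈ H2, g = shift (mul θ k)} ∧
    ∃ F : Submodule ℂ L2, Module.finrank ℂ F = 1 ∧
      ∀ f ∈ kerR (conjInf θ) (fun _ : Fin 1 => u) (fun _ : Fin 1 => v),
        coeff f 0 = 0 → ∃ w ∈ F,
          bshift f - w ∈ kerR (conjInf θ) (fun _ : Fin 1 => u) (fun _ : Fin 1 => v) := by
  have hsub1 : ∀ k ∈ H2, shift (mul θ k) ∈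
      kerR (conjInf θ) (fun _ : Fin 1 => u) (fun _ : Fin 1 => v) := by
    intro k hk
    have hθk : mul θ k ∈ H2 := hθ.1 k hk
    simp only [kerR, Set.mem_setOf_eq, Fin.sum_univ_one]
    have hmemH : shift (mul θ k) ∈ H2 := by
      apply mem_H2_of_coeff
      intro n hn
      rw [show shift (mul θ k) = mul (fourierLp ⊤ 1) (mul θ k) from rfl, coeff_mul_fourier]
      exact coeff_zero_of_mem_H2 hθk (by omega)
    refine ⟨hmemH, ?_⟩
    have hip : ip u (shift (mul θ k)) = 0 := by
      have h0 : (inner ℂ (shift (mul θ k)) u : ℂ) = 0 := hperp k hk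
      rw [ip, ← inner_conj_symm, h0, map_zero]
    have hmm : mul (conjInf θ) (shift (mul θ k)) = shift k := by
      apply Lp.ext
      filter_upwards [mul_ae (conjInf θ) (shift (mul θ k)), mul_ae zsym (mul θ k),
        mul_ae θ k, conjInf_ae θ, mul_ae zsym k, conj_mul_self_ae hθ.2]
        with x h1 h2 h3 h4 h5 h6
      rw [show (shift k : Circ → ℂ) x = (mul zsym k : Circ → ℂ) x from rfl, h1, h5, h4,
        show (shift (mul θ k) : Circ → ℂ) x = (mul zsym (mul θ k) : Circ → ℂ) x from rfl,
        h2, h3]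
      calc conj ((θ : Circ → ℂ) x) * ((zsym : Circ → ℂ) x *
              ((θ : Circ → ℂ) x * (k : Circ → ℂ) x))
          = (conj ((θ : Circ → ℂ) x) * (θ : Circ → ℂ) x) *
              ((zsym : Circ → ℂ) x * (k : Circ → ℂ) x) := by ring
        _ = (zsym : Circ → ℂ) x * (k : Circ → ℂ) x := by rw [h6, one_mul]
    have hhank : hank (conjInf θ) (shift (mul θ k)) = 0 := by
      rw [show hank (conjInf θ) (shift (mul θ k))
          = P (J (mul (conjInf θ) (shift (mul θ k)))) from rfl, hmm]
      apply P_eq_zero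
      intro n hn
      rw [coeff_J, show shift k = mul (fourierLp ⊤ 1) k from rfl, coeff_mul_fourier]
      exact coeff_zero_of_mem_H2 hk (by omega)
    rw [hhank, hip, zero_smul, add_zero]
  have hker_eq : kerR (conjInf θ) (fun _ : Fin 1 => u) (fun _ : Fin 1 => v)
      = {g | ∃ k ∈ H2, g = shift (mul θ k)} := by
    ext h
    simp only [kerR, Set.mem_setOf_eq, Fin.sum_univ_one]
    constructor
    · rintro ⟨hH, heq⟩
      set c : ℂ := ip u h with hc
      have heq' : P (J (mul (conjInf θ) h)) = -(c • v) :=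
        eq_neg_of_add_eq_zero_left heq
      set m : L2 := mul (conjInf θ) h with hm
      have hJm : ∀ j : ℤ, 0 ≤ j → coeff (J m) j = -(c * coeff v j) := by
        intro j hj
        rw [← coeff_P (J m) hj, heq', coeff_neg, coeff_smul]
      set q : L2 := m + c • J v with hqdef
      have hq' : ∀ n : ℤ, n ≤ 0 → coeff q n = 0 := by
        intro n hn
        rw [hqdef, coeff_add, coeff_smul, coeff_J,
          show coeff m n = coeff (J m) (-n) by rw [coeff_J, neg_neg],
          hJm (-n) (by omega)]
        ring
      set k : L2 := mul zbar q with hkdef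
      have hkH : k ∈ H2 := by
        apply mem_H2_of_coeff
        intro n hn
        rw [hkdef, show zbar = fourierLp ⊤ (-1) from rfl, coeff_mul_fourier]
        exact hq' (n - (-1)) (by omega)
      have key : h + c • mul θ (J v) = shift (mul θ k) := by
        apply Lp.ext
        filter_upwards [Lp.coeFn_add h (c • mul θ (J v)), Lp.coeFn_smul c (mul θ (J v)),
          mul_ae θ (J v), mul_ae zsym (mul θ k), mul_ae θ k, mul_ae zbar q,
          Lp.coeFn_add m (c • J v), Lp.coeFn_smul c (J v), mul_ae (conjInf θ) h,
          conjInf_ae θ, conj_mul_self_ae hθ.2, coeFn_fourierLp (T := 1) ⊤ 1,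
          coeFn_fourierLp (T := 1) ⊤ (-1)]
          with x e1 e2 e3 e4 e5 e6 e7 e8 e9 e10 e11 e12 e13
        have e12' : (zsym : Circ → ℂ) x = fourier 1 x := e12
        have e13' : (zbar : Circ → ℂ) x = fourier (-1) x := e13
        simp only [Pi.add_apply, Pi.smul_apply, smul_eq_mul] at e1 e2 e7 e8
        rw [e1, e2, e3,
          show (shift (mul θ k) : Circ → ℂ) x = (mul zsym (mul θ k) : Circ → ℂ) x from rfl,
          e4, e5, e6, e7, e8, e9, e10, e12', e13']
        have hf1 := fourier_one_mul_neg_one x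
        calc (h : Circ → ℂ) x + c * ((θ : Circ → ℂ) x * (J v : Circ → ℂ) x)
            = ((fourier 1 x : ℂ) * fourier (-1) x) *
                ((conj ((θ : Circ → ℂ) x) * (θ : Circ → ℂ) x) * (h : Circ → ℂ) x)
              + ((fourier 1 x : ℂ) * fourier (-1) x) *
                (c * ((θ : Circ → ℂ) x * (J v : Circ → ℂ) x)) := by
              rw [hf1, e11]; ring
          _ = (fourier 1 x : ℂ) * ((θ : Circ → ℂ) x * ((fourier (-1) x : ℂ) *
                (conj ((θ : Circ → ℂ) x) * (h : Circ → ℂ) x + c * (J v : Circ → ℂ) x))) := by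
              ring
      have hcc : c = 0 := by
        have hrep : h = shift (mul θ k) - c • mul θ (J v) := by
          rw [← key]; abel
        have h2 : ip u (shift (mul θ k)) = 0 := by
          have h0 : (inner ℂ (shift (mul θ k)) u : ℂ) = 0 := hperp k hkH
          rw [ip, ← inner_conj_symm, h0, map_zero]
        have h1 : c = - (c * ip u (mul θ (J v))) := by
          conv_lhs => rw [hc, ip, hrep]
          rw [inner_sub_right, inner_smul_right]
          rw [show (inner ℂ u (shift (mul θ k)) : ℂ) = 0 from h2]
          simp only [ip]
          ring
        have h3 : c * (1 + ip u (mul θ (J v))) = 0 := by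
          linear_combination h1
        rcases mul_eq_zero.mp h3 with h | h
        · exact h
        · exact absurd h hne
      refine ⟨k, hkH, ?_⟩
      have : h + (0 : ℂ) • mul θ (J v) = shift (mul θ k) := by rw [← hcc]; exact key
      simpa using this
    · rintro ⟨k, hk, rfl⟩
      have := hsub1 k hk
      simpa only [kerR, Set.mem_setOf_eq, Fin.sum_univ_one] using this
  refine ⟨hker_eq, ?_⟩
  have hθ0 : toL2 θ ≠ 0 := by
    intro h0
    have h1 : ⇑(toL2 θ) =ᵐ[μT] 0 := by rw [h0]; exact Lp.coeFn_zero ℂ 2 μT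
    have h2 : ∀ᵐ _x ∂μT, False := by
      filter_upwards [mul_ae θ one2, coeFn_fourierLp (T := 1) 2 0, hθ.2, h1]
        with x ha hb hc hd
      rw [show (toL2 θ : Circ → ℂ) x = (mul θ one2 : Circ → ℂ) x from rfl, ha,
        show (one2 : Circ → ℂ) x = fourier 0 x from hb, fourier_zero, mul_one] at hd
      rw [Pi.zero_apply] at hd
      rw [hd] at hc
      simp at hc
    obtain ⟨x, hx⟩ := h2.exists
    exact hx
  refine ⟨Submodule.span ℂ {toL2 θ}, finrank_span_singleton hθ0, ?_⟩
  intro f hf _hf0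
  rw [hker_eq] at hf
  obtain ⟨k, hkH, rfl⟩ := hf
  set c0 : ℂ := coeff k 0 with hc0
  refine ⟨c0 • toL2 θ, Submodule.smul_mem _ _ (Submodule.mem_span_singleton_self _), ?_⟩
  rw [hker_eq]
  set k2 : L2 := mul zbar (k - c0 • one2) with hk2
  have hk2H : k2 ∈ H2 := by
    apply mem_H2_of_coeff
    intro n hn
    rw [hk2, show zbar = fourierLp ⊤ (-1) from rfl, coeff_mul_fourier, coeff_sub, coeff_smul,
      show one2 = (fourierLp 2 0 : L2) from rfl, coeff_fourier]
    rcases eq_or_ne (n - (-1)) 0 with h | h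
    · rw [h, if_pos rfl, mul_one, ← hc0, sub_self]
    · rw [if_neg h, mul_zero, sub_zero]
      exact coeff_zero_of_mem_H2 hkH (by omega)
  have hb : bshift (shift (mul θ k)) = mul θ k := by
    have h1 : mul zbar (shift (mul θ k)) = mul θ k := by
      apply Lp.ext
      filter_upwards [mul_ae zbar (shift (mul θ k)), mul_ae zsym (mul θ k),
        coeFn_fourierLp (T := 1) ⊤ 1, coeFn_fourierLp (T := 1) ⊤ (-1)]
        with x h1 h2 h3 h4
      have h3' : (zsym : Circ → ℂ) x = fourier 1 x := h3
      have h4' : (zbar : Circ → ℂ) x = fourier (-1) x := h4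
      rw [h1, show (shift (mul θ k) : Circ → ℂ) x = (mul zsym (mul θ k) : Circ → ℂ) x from rfl,
        h2, h3', h4']
      calc (fourier (-1) x : ℂ) * (fourier 1 x * (mul θ k : Circ → ℂ) x)
          = ((fourier 1 x : ℂ) * fourier (-1) x) * (mul θ k : Circ → ℂ) x := by ring
        _ = (mul θ k : Circ → ℂ) x := by rw [fourier_one_mul_neg_one, one_mul]
    rw [show bshift (shift (mul θ k)) = P (mul zbar (shift (mul θ k))) from rfl, h1]
    exact P_eq_self (hθ.1 k hkH)
  rw [hb]
  refine ⟨k2, hk2H, ?_⟩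
  apply Lp.ext
  filter_upwards [Lp.coeFn_sub (mul θ k) (c0 • toL2 θ), Lp.coeFn_smul c0 (toL2 θ),
    mul_ae θ one2, coeFn_fourierLp (T := 1) 2 0, mul_ae θ k,
    mul_ae zsym (mul θ k2), mul_ae θ k2, mul_ae zbar (k - c0 • one2),
    Lp.coeFn_sub k (c0 • one2), Lp.coeFn_smul c0 one2,
    coeFn_fourierLp (T := 1) ⊤ 1, coeFn_fourierLp (T := 1) ⊤ (-1)]
    with x e1 e2 e3 e4 e5 e6 e7 e8 e9 e10 e11 e12
  have e11' : (zsym : Circ → ℂ) x = fourier 1 x := e11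
  have e12' : (zbar : Circ → ℂ) x = fourier (-1) x := e12
  have e4' : (one2 : Circ → ℂ) x = fourier 0 x := e4
  simp only [Pi.sub_apply, Pi.smul_apply, smul_eq_mul] at e1 e2 e9 e10
  rw [e1, e2, show (toL2 θ : Circ → ℂ) x = (mul θ one2 : Circ → ℂ) x from rfl, e3,
    e4', fourier_zero, mul_one, e5,
    show (shift (mul θ k2) : Circ → ℂ) x = (mul zsym (mul θ k2) : Circ → ℂ) x from rfl,
    e6, e7, e8, e9, e10, e4', fourier_zero, mul_one, e11', e12']
  calc (θ : Circ → ℂ) x * (k : Circ → ℂ) x - c0 * (θ : Circ → ℂ) x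
      = ((fourier 1 x : ℂ) * fourier (-1) x) *
          ((θ : Circ → ℂ) x * ((k : Circ → ℂ) x - c0)) := by
        rw [fourier_one_mul_neg_one]; ring
    _ = (fourier 1 x : ℂ) * ((θ : Circ → ℂ) x *
          ((fourier (-1) x : ℂ) * ((k : Circ → ℂ) x - c0))) := by ring
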